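/- arXiv:1507.02760 — 5 statements merged into one kernel-verified Lean document; each statement's English description precedes it below -/
import Mathlib

section
/- Let A and B be real symmetric matrices of the same size with rank(A+B) ≥ rank(A) + k. Then sign~(A+B) − sign~(A) ≤ 2·rank(B) − 2k, where sign~(Q) = p₊(Q) + p₀(Q) − p₋(Q) and p₊, p₀, p₋ denote the numbers of positive, zero, and negative eigenvalues respectively. -/
open Finset

/-! Since `p₊ + p₀ + p₋ = n` and `rank = p₊ + p₋`, the claim reduces to
`p₊(A + B) ≤ p₊(A) + rank B`. Write `A = A⁺ - A⁻` with `A⁻ ⪰ 0`. Compressed to the span of the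
eigenvectors of `A + B` with positive eigenvalue, `A + B + A⁻ = A⁺ + B` is positive definite, so
`p₊(A + B) ≤ rank (A⁺ + B) ≤ rank A⁺ + rank B = p₊(A) + rank B`. -/

section RealCounts

variable {ι : Type*} [Fintype ι] (f : ι → ℝ)

theorem card_filter_ne_zero_eq_card_filter_pos_add_card_filter_neg :
    #{i | f i ≠ 0} = #{i | 0 < f i} + #{i | f i < 0} := by
  simp only [card_filter, ← sum_add_distrib]
  refine sum_congr rfl fun i _ => ?_
  grind

theorem card_filter_pos_add_card_filter_eq_zero_add_card_filter_neg :
    #{i | 0 < f i} + #{i | f i = 0} + #{i | f i < 0} = Fintype.card ι := by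
  simp only [card_filter, ← sum_add_distrib, Fintype.card_eq_sum_ones]
  refine sum_congr rfl fun i _ => ?_
  grind

end RealCounts

namespace Matrix

theorem rank_add_le {m n K : Type*} [Finite m] [Fintype n] [Field K] (A B : Matrix m n K) :
    (A + B).rank ≤ A.rank + B.rank := by
  rw [rank, rank, rank, mulVecLin_add]
  exact (Submodule.finrank_mono (LinearMap.range_add_le _ _)).trans
    (Submodule.finrank_add_le_finrank_add_finrank _ _)

open Unitary
open scoped ComplexOrder
variable {𝕜 n : Type*} [RCLike 𝕜] [Fintype n] [DecidableEq n] {A : Matrix n n 𝕜}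

theorem IsHermitian.rank_eq_card_pos_add_card_neg (hA : A.IsHermitian) :
    A.rank = #{i | 0 < hA.eigenvalues i} + #{i | hA.eigenvalues i < 0} := by
  rw [hA.rank_eq_card_non_zero_eigs, Fintype.card_subtype,
    card_filter_ne_zero_eq_card_filter_pos_add_card_filter_neg]

theorem IsHermitian.rank_cfc (hA : A.IsHermitian) (f : ℝ → ℝ) :
    (cfc f A).rank = #{i | f (hA.eigenvalues i) ≠ 0} := by
  rw [hA.cfc_eq, IsHermitian.cfc, conjStarAlgAut_apply, ← Unitary.coe_star]
  simp [-isUnit_iff_ne_zero, -Unitary.coe_star, rank_diagonal, Fintype.card_subtype]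

theorem IsHermitian.rank_posPart (hA : A.IsHermitian) :
    (A⁺).rank = #{i | 0 < hA.eigenvalues i} := by
  rw [CFC.posPart_def, cfcₙ_eq_cfc, hA.rank_cfc]
  simp

theorem IsHermitian.card_pos_eigenvalues_le_rank_add (hA : A.IsHermitian) {N : Matrix n n 𝕜}
    (hN : N.PosSemidef) : #{i | 0 < hA.eigenvalues i} ≤ (A + N).rank := by
  let U : Matrix n n 𝕜 := hA.eigenvectorUnitary
  let V : Matrix n {i // 0 < hA.eigenvalues i} 𝕜 := U.submatrix id Subtype.val
  have hVAV : Vᴴ * A * V =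
      diagonal fun j : {i // 0 < hA.eigenvalues i} => (hA.eigenvalues j : 𝕜) := by
    have hsub : Vᴴ * A * V = (star U * A * U).submatrix Subtype.val Subtype.val := by
      rw [submatrix_mul _ _ _ id _ Function.bijective_id,
        submatrix_mul _ _ _ id _ Function.bijective_id, submatrix_id_id, star_eq_conjTranspose,
        conjTranspose_submatrix]
    rw [hsub, ← conjStarAlgAut_star_apply (S := 𝕜), hA.conjStarAlgAut_star_eigenvectorUnitary,
      submatrix_diagonal _ _ Subtype.val_injective]
    rfl
  have hPD : (Vᴴ * (A + N) * V).PosDef := by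
    rw [Matrix.mul_add, Matrix.add_mul, hVAV]
    exact (PosDef.diagonal fun j => by simpa using j.2).add_posSemidef
      (hN.conjTranspose_mul_mul_same V)
  calc #{i | 0 < hA.eigenvalues i} = (Vᴴ * (A + N) * V).rank := by
        rw [rank_of_isUnit _ hPD.isUnit, Fintype.card_subtype]
    _ ≤ ((A + N) * V).rank := by rw [Matrix.mul_assoc]; exact rank_mul_le_right _ _
    _ ≤ (A + N).rank := rank_mul_le_left _ _

open scoped MatrixOrder in
theorem IsHermitian.card_pos_eigenvalues_add_le_add_rank (hA : A.IsHermitian)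
    {B : Matrix n n 𝕜} (hB : B.IsHermitian) :
    #{i | 0 < (hA.add hB).eigenvalues i} ≤ #{i | 0 < hA.eigenvalues i} + B.rank := by
  have hsum : A + B + A⁻ = A⁺ + B := by
    rw [(sub_eq_iff_eq_add.mp (CFC.posPart_sub_negPart A hA))]; abel
  calc #{i | 0 < (hA.add hB).eigenvalues i}
      ≤ (A + B + A⁻).rank :=
        (hA.add hB).card_pos_eigenvalues_le_rank_add
          (nonneg_iff_posSemidef.mp (CFC.negPart_nonneg A))
    _ = (A⁺ + B).rank := by rw [hsum]
    _ ≤ A⁺.rank + B.rank := rank_add_le _ _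
    _ = #{i | 0 < hA.eigenvalues i} + B.rank := by rw [hA.rank_posPart]

end Matrix

/-- If `rank(A+B) ≥ rank A + k` for real symmetric matrices `A`, `B`, then
`sign~(A+B) - sign~(A) ≤ 2 rank B - 2k`, where `sign~(Q) = p₊(Q) + p₀(Q) - p₋(Q)`. -/
theorem signTilde_diff_le {n k : ℕ} (A B : Matrix (Fin n) (Fin n) ℝ)
    (hA : A.IsHermitian) (hB : B.IsHermitian)
    (hrank : A.rank + k ≤ (A + B).rank) :
    ((((univ.filter fun i => 0 < (hA.add hB).eigenvalues i).card : ℤ) +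
       ((univ.filter fun i => (hA.add hB).eigenvalues i = 0).card : ℤ) -
       ((univ.filter fun i => (hA.add hB).eigenvalues i < 0).card : ℤ)) -
     (((univ.filter fun i => 0 < hA.eigenvalues i).card : ℤ) +
       ((univ.filter fun i => hA.eigenvalues i = 0).card : ℤ) -
       ((univ.filter fun i => hA.eigenvalues i < 0).card : ℤ)))
      ≤ 2 * (B.rank : ℤ) - 2 * (k : ℤ) := by
  have hpos := hA.card_pos_eigenvalues_add_le_add_rank hB
  have hrankAB := (hA.add hB).rank_eq_card_pos_add_card_neg
  have hrankA := hA.rank_eq_card_pos_add_card_neg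
  have hcardAB :=
    card_filter_pos_add_card_filter_eq_zero_add_card_filter_neg (hA.add hB).eigenvalues
  have hcardA := card_filter_pos_add_card_filter_eq_zero_add_card_filter_neg hA.eigenvalues
  omega
end

section
/- Let U ⊂ ℝᵐ be a convex open set and K ⊂ U a compact subset. Then there exists an open set V with K ⊂ V, the closure of V contained in U, such that V = {x : F(x) < 0} for some smooth function F : ℝᵐ → ℝ with positive definite Hessian everywhere (in particular V is strictly convex). -/
open Metric Real Set Filter Bornology Topology

section auxcalc

variable {E : Type*} [NormedAddCommGroup E] [InnerProductSpace ℝ E]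

private lemma aux_hasFDerivAt (g : ℝ → ℝ) (hg : Differentiable ℝ g) (ℓ : E →L[ℝ] ℝ) (x : E) :
    HasFDerivAt (fun y => g (ℓ y)) (deriv g (ℓ x) • ℓ) x :=
  (hg (ℓ x)).hasDerivAt.comp_hasFDerivAt x ℓ.hasFDerivAt

private lemma aux_hessian {ι : Type*} (t : Finset ι) (g : ι → ℝ → ℝ)
    (hg : ∀ i, ContDiff ℝ (⊤ : ℕ∞) (g i)) (ℓ : ι → E →L[ℝ] ℝ) (r : ℝ) (x v : E) :
    iteratedFDeriv ℝ 2 (fun x : E => (∑ i ∈ t, g i (ℓ i x)) - r) x ![v, v]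
      = ∑ i ∈ t, deriv (deriv (g i)) (ℓ i x) * (ℓ i v) ^ 2 := by
  have hginf : ∀ i, ContDiff ℝ ((⊤ : ℕ∞) : WithTop ℕ∞) (g i) := fun i => (hg i).of_le (by simp)
  have hgd : ∀ i, Differentiable ℝ (g i) := fun i => (hginf i).differentiable (by simp)
  have hgd' : ∀ i, Differentiable ℝ (deriv (g i)) := fun i =>
    ((contDiff_infty_iff_deriv.mp (hginf i)).2).differentiable (by simp)
  have hD1 : ∀ y : E, HasFDerivAt (fun z : E => (∑ i ∈ t, g i (ℓ i z)) - r)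
      (∑ i ∈ t, deriv (g i) (ℓ i y) • ℓ i) y := fun y =>
    (HasFDerivAt.fun_sum fun i _ => aux_hasFDerivAt (g i) (hgd i) (ℓ i) y).sub_const r
  have hfd : (fderiv ℝ (fun z : E => (∑ i ∈ t, g i (ℓ i z)) - r))
      = fun y => ∑ i ∈ t, deriv (g i) (ℓ i y) • ℓ i := funext fun y => (hD1 y).fderiv
  have hD2 : HasFDerivAt (fun y : E => ∑ i ∈ t, deriv (g i) (ℓ i y) • ℓ i)
      (∑ i ∈ t, ((deriv (deriv (g i)) (ℓ i x)) • ℓ i).smulRight (ℓ i)) x :=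
    HasFDerivAt.fun_sum fun i _ =>
      (aux_hasFDerivAt (deriv (g i)) (hgd' i) (ℓ i) x).smul_const (ℓ i)
  rw [iteratedFDeriv_two_apply, hfd, hD2.fderiv]
  simp only [Matrix.cons_val_zero, Matrix.cons_val_one, Matrix.head_cons,
    ContinuousLinearMap.coe_sum', Finset.sum_apply, ContinuousLinearMap.smulRight_apply,
    ContinuousLinearMap.smul_apply, smul_eq_mul]
  exact Finset.sum_congr rfl fun i _ => by ring

private lemma aux_package {ι : Type*} (t : Finset ι) (g : ι → ℝ → ℝ)
    (hg : ∀ i, ContDiff ℝ (⊤ : ℕ∞) (g i)) (ℓ : ι → E →L[ℝ] ℝ) (r : ℝ) :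
    ∃ F : E → ℝ, ContDiff ℝ (⊤ : ℕ∞) F ∧
      (∀ x v : E, iteratedFDeriv ℝ 2 F x ![v, v]
        = ∑ i ∈ t, deriv (deriv (g i)) (ℓ i x) * (ℓ i v) ^ 2) ∧
      F = fun x : E => (∑ i ∈ t, g i (ℓ i x)) - r :=
  ⟨fun x : E => (∑ i ∈ t, g i (ℓ i x)) - r,
    (ContDiff.sum fun i _ => (hg i).comp (ℓ i).contDiff).sub contDiff_const,
    fun x v => aux_hessian t g hg ℓ r x v, rfl⟩

private lemma d2_sq (δ : ℝ) (s : ℝ) : deriv (deriv (fun s : ℝ => δ * s ^ 2)) s = 2 * δ := by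
  have h1 : deriv (fun s : ℝ => δ * s ^ 2) = fun s : ℝ => 2 * δ * s := by
    funext u
    rw [((hasDerivAt_pow 2 u).const_mul δ).deriv]
    push_cast
    ring
  rw [h1]
  have h2 : HasDerivAt (fun s : ℝ => 2 * δ * s) (2 * δ) s := by
    simpa using (hasDerivAt_id s).const_mul (2 * δ)
  rw [h2.deriv]

private lemma d2_exp (lam c : ℝ) (s : ℝ) :
    deriv (deriv (fun s : ℝ => Real.exp (lam * (s - c)))) s
      = lam ^ 2 * Real.exp (lam * (s - c)) := by
  have h0 : ∀ u : ℝ, HasDerivAt (fun s : ℝ => Real.exp (lam * (s - c)))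
      (lam * Real.exp (lam * (u - c))) u := by
    intro u
    have h1 : HasDerivAt (fun s : ℝ => lam * (s - c)) lam u := by
      simpa using ((hasDerivAt_id u).sub_const c).const_mul lam
    exact ((Real.hasDerivAt_exp (lam * (u - c))).comp u h1).congr_deriv (mul_comm _ _)
  have h1 : deriv (fun s : ℝ => Real.exp (lam * (s - c)))
      = fun u : ℝ => lam * Real.exp (lam * (u - c)) := funext fun u => (h0 u).deriv
  rw [h1, ((h0 s).const_mul lam).deriv]
  ring

end auxcalc

private lemma sum_sq_eq_norm_sq {m : ℕ} (x : EuclideanSpace ℝ (Fin m)) :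
    ∑ j : Fin m, (x j) ^ 2 = ‖x‖ ^ 2 := by
  have h : ‖x‖ ^ 2 = ∑ j : Fin m, ‖x j‖ ^ 2 := by
    rw [EuclideanSpace.norm_eq, Real.sq_sqrt (Finset.sum_nonneg fun j _ => sq_nonneg _)]
  rw [h]
  simp [Real.norm_eq_abs, sq_abs]

set_option maxHeartbeats 2000000 in
/-- Any compact subset `K` of a convex open set `U ⊂ ℝᵐ` can be enclosed in a
strictly convex open set `V` with closure contained in `U`: `V = {F < 0}` for some
smooth `F` with everywhere positive definite Hessian. -/
theorem exists_strictly_convex_between {m : ℕ} (U K : Set (EuclideanSpace ℝ (Fin m)))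
    (hUo : IsOpen U) (hUconv : Convex ℝ U) (hK : IsCompact K) (hKU : K ⊆ U) :
    ∃ V : Set (EuclideanSpace ℝ (Fin m)), IsOpen V ∧ K ⊆ V ∧ closure V ⊆ U ∧
      ∃ F : EuclideanSpace ℝ (Fin m) → ℝ, ContDiff ℝ (⊤ : ℕ∞) F ∧
        (∀ x v, v ≠ 0 → 0 < iteratedFDeriv ℝ 2 F x ![v, v]) ∧
        V = {x | F x < 0} := by
  classical
  rcases K.eq_empty_or_nonempty with rfl | ⟨k₀, hk₀⟩
  · -- empty case : a tiny ball-like set, in fact the empty set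
    obtain ⟨F, hFsm, hFhess, hFdef⟩ := aux_package (Finset.univ : Finset (Fin m))
      (fun _ => fun s : ℝ => (1 : ℝ) * s ^ 2)
      (fun _ => contDiff_const.mul (contDiff_id.pow 2))
      (fun j => EuclideanSpace.proj j) (-1)
    refine ⟨∅, isOpen_empty, by simp, by simp, F, hFsm, ?_, ?_⟩
    · intro x v hv
      rw [hFhess x v]
      have he : ∀ j : Fin m,
          deriv (deriv (fun s : ℝ => (1 : ℝ) * s ^ 2)) ((EuclideanSpace.proj j) x)
            * ((EuclideanSpace.proj j) v) ^ 2 = 2 * (v j) ^ 2 := by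
        intro j
        rw [d2_sq (1 : ℝ)]
        simp [PiLp.proj_apply]
      rw [Finset.sum_congr rfl fun j _ => he j, ← Finset.mul_sum, sum_sq_eq_norm_sq]
      have : 0 < ‖v‖ ^ 2 := pow_pos (norm_pos_iff.mpr hv) 2
      linarith
    · ext x
      simp only [Set.mem_empty_iff_false, Set.mem_setOf_eq, false_iff, not_lt, hFdef]
      have h1 : (0:ℝ) ≤ ∑ j : Fin m, (1:ℝ) * ((EuclideanSpace.proj j) x) ^ 2 :=
        Finset.sum_nonneg fun j _ => by positivity
      linarith
  · -- nonempty case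
    set C : Set (EuclideanSpace ℝ (Fin m)) := closure (convexHull ℝ K) with hCdef
    have hCconv : Convex ℝ C := (convex_convexHull ℝ K).closure
    have hCbd : IsBounded C := (isBounded_convexHull.mpr hK.isBounded).closure
    have hCcomp : IsCompact C := isCompact_of_isClosed_isBounded isClosed_closure hCbd
    have hKC : K ⊆ C := (subset_convexHull ℝ K).trans subset_closure
    have hCne : C.Nonempty := ⟨k₀, hKC hk₀⟩
    -- C ⊆ U
    have hCU : C ⊆ U := by
      obtain ⟨δ₀, hδ₀, hδ₀U⟩ := hK.exists_thickening_subset_open hUo hKU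
      intro x hx
      obtain ⟨y, hy, hxy⟩ := Metric.mem_closure_iff.1 hx δ₀ hδ₀
      refine convexHull_min hδ₀U hUconv ?_
      have himg : x ∈ (AffineEquiv.constVAdd ℝ (EuclideanSpace ℝ (Fin m)) (x - y)).toAffineMap ''
          (convexHull ℝ K) := ⟨y, hy, by
        simp [AffineEquiv.constVAdd_apply]⟩
      rw [AffineMap.image_convexHull] at himg
      refine convexHull_mono ?_ himg
      rintro w ⟨k, hk, rfl⟩
      refine mem_thickening_iff.2 ⟨k, hk, ?_⟩
      simp only [AffineEquiv.coe_toAffineMap, AffineEquiv.constVAdd_apply, vadd_eq_add]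
      rw [dist_eq_norm]
      simpa [dist_eq_norm, norm_sub_rev] using hxy
    -- thickening parameter
    obtain ⟨δ₁, hδ₁, hδ₁U⟩ := hCcomp.exists_thickening_subset_open hUo hCU
    set ε : ℝ := δ₁ / 2 with hεdef
    have hε : 0 < ε := by positivity
    set A : Set (EuclideanSpace ℝ (Fin m)) := {x | infDist x C ≤ ε} with hAdef
    have hAU : A ⊆ U := by
      intro x hx
      exact hδ₁U ((mem_thickening_iff_infDist_lt hCne).2 (lt_of_le_of_lt hx (by
        rw [hεdef]; linarith)))
    set B : Set (EuclideanSpace ℝ (Fin m)) := {x | infDist x C ≤ ε / 2} with hBdef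
    have hBeq : B = cthickening (ε / 2) C := by
      ext x
      rw [mem_cthickening_iff]
      exact (ENNReal.le_ofReal_iff_toReal_le (infEdist_ne_top hCne) (by positivity)).symm
    have hBconv : Convex ℝ B := hBeq ▸ hCconv.cthickening _
    have hBclosed : IsClosed B := isClosed_le (continuous_infDist_pt C) continuous_const
    have hKB : K ⊆ B := by
      intro x hx
      show infDist x C ≤ ε / 2
      rw [infDist_zero_of_mem (hKC hx)]
      positivity
    set S : Set (EuclideanSpace ℝ (Fin m)) := {x | infDist x C = ε} with hSdef
    have hSA : S ⊆ A := fun x hx => le_of_eq hx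
    have hAbd : IsBounded A := by
      refine isBounded_closedBall.subset (?_ : A ⊆ closedBall k₀ (ε + diam C))
      intro x hx
      have h1 : dist x k₀ ≤ infDist x C + diam C := dist_le_infDist_add_diam hCbd (hKC hk₀)
      have h2 : infDist x C ≤ ε := hx
      exact mem_closedBall.2 (by linarith)
    have hScomp : IsCompact S :=
      isCompact_of_isClosed_isBounded (isClosed_eq (continuous_infDist_pt C) continuous_const)
        (hAbd.subset hSA)
    -- separating functionals
    have hsep : ∀ y : S, ∃ L : EuclideanSpace ℝ (Fin m) →L[ℝ] ℝ, ∃ c : ℝ,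
        (∀ b ∈ B, L b < c) ∧ c < L y := by
      intro y
      have hyB : (y : EuclideanSpace ℝ (Fin m)) ∉ B := by
        intro h
        have h1 : infDist (y : EuclideanSpace ℝ (Fin m)) C = ε := y.2
        have h2 : infDist (y : EuclideanSpace ℝ (Fin m)) C ≤ ε / 2 := h
        linarith
      obtain ⟨f, u, v, hfy, huv, hfB⟩ := geometric_hahn_banach_compact_closed
        (convex_singleton (y : EuclideanSpace ℝ (Fin m))) isCompact_singleton hBconv hBclosed
        (Set.disjoint_singleton_left.2 hyB)
      refine ⟨-f, -v, fun b hb => ?_, ?_⟩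
      · have := hfB b hb
        simp only [ContinuousLinearMap.neg_apply]
        linarith
      · have := hfy _ (Set.mem_singleton _)
        simp only [ContinuousLinearMap.neg_apply]
        linarith
    choose L c hLB hLy using hsep
    -- finite subcover
    have hcov : S ⊆ ⋃ y : S, {x | c y < L y x} := fun z hz =>
      Set.mem_iUnion.2 ⟨⟨z, hz⟩, hLy ⟨z, hz⟩⟩
    obtain ⟨T, hT⟩ := hScomp.elim_finite_subcover (fun y : S => {x | c y < L y x})
      (fun y => isOpen_lt continuous_const (L y).continuous) hcov
    -- radius bound
    obtain ⟨R₀, hR₀⟩ := hAbd.subset_closedBall 0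
    have hk₀A : k₀ ∈ A := by
      show infDist k₀ C ≤ ε
      rw [infDist_zero_of_mem (hKC hk₀)]
      positivity
    have hR₀0 : 0 ≤ R₀ := le_trans dist_nonneg (mem_closedBall.1 (hR₀ hk₀A))
    set Rsq : ℝ := R₀ ^ 2 + 1 with hRsqdef
    have hRsq : 0 < Rsq := by positivity
    set δ : ℝ := 1 / (2 * Rsq) with hδdef
    have hδ : 0 < δ := by positivity
    have hδRsq : δ * Rsq = 1 / 2 := by
      rw [hδdef]
      field_simp
    -- margins on K
    have hmar : ∀ i : S, ∃ μ : ℝ, 0 < μ ∧ ∀ z ∈ K, L i z ≤ c i - μ := by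
      intro i
      obtain ⟨z₀, hz₀K, hmax⟩ := hK.exists_isMaxOn ⟨k₀, hk₀⟩ (L i).continuous.continuousOn
      refine ⟨c i - L i z₀, ?_, fun z hz => ?_⟩
      · have := hLB i z₀ (hKB hz₀K)
        linarith
      · have := hmax hz
        simp only [Set.mem_setOf_eq] at this
        linarith
    choose μ hμpos hμK using hmar
    -- choose lam
    obtain ⟨lam, hlam0, hlamT⟩ : ∃ lam : ℝ, 0 < lam ∧
        ∀ i ∈ T, Real.exp (lam * (-μ i)) < δ / (T.card + 1) := by
      have hδ' : 0 < δ / (T.card + 1) := by positivity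
      have h1 : ∀ᶠ lam : ℝ in atTop, ∀ i ∈ T, Real.exp (lam * (-μ i)) < δ / (T.card + 1) := by
        rw [eventually_all_finset]
        intro i _
        have htend : Tendsto (fun lam : ℝ => Real.exp (lam * (-μ i))) atTop (𝓝 0) := by
          rw [Real.tendsto_exp_comp_nhds_zero]
          exact Tendsto.atTop_mul_const_of_neg (by linarith [hμpos i]) tendsto_id
        exact htend.eventually_lt_const hδ'
      obtain ⟨lam, h2, h3⟩ := ((eventually_gt_atTop (0:ℝ)).and h1).exists
      exact ⟨lam, h2, h3⟩
    -- the function F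
    obtain ⟨F, hFsm, hFhess, hFdef⟩ := aux_package
      ((Finset.univ : Finset (Fin m)).disjSum T)
      (Sum.elim (fun _ => fun s : ℝ => δ * s ^ 2)
        (fun i => fun s : ℝ => Real.exp (lam * (s - c i))))
      (by
        rintro (j | i)
        · exact contDiff_const.mul (contDiff_id.pow 2)
        · exact Real.contDiff_exp.comp (contDiff_const.mul (contDiff_id.sub contDiff_const)))
      (Sum.elim (fun j => EuclideanSpace.proj j) L)
      (δ * Rsq)
    have hFeval : ∀ x, F x = δ * (‖x‖ ^ 2 - Rsq) + ∑ i ∈ T, Real.exp (lam * (L i x - c i)) := by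
      intro x
      rw [hFdef]
      simp only [Finset.sum_disjSum, Sum.elim_inl, Sum.elim_inr]
      rw [← Finset.mul_sum]
      have h1 : ∑ j : Fin m, ((EuclideanSpace.proj j) x) ^ 2 = ‖x‖ ^ 2 := by
        simpa [PiLp.proj_apply] using sum_sq_eq_norm_sq x
      rw [h1]
      ring
    refine ⟨{x | F x < 0}, isOpen_lt hFsm.continuous continuous_const, ?_, ?_, F, hFsm, ?_, rfl⟩
    · -- K ⊆ V
      intro x hx
      show F x < 0
      rw [hFeval x]
      have hxA : x ∈ A := by
        show infDist x C ≤ ε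
        rw [infDist_zero_of_mem (hKC hx)]
        positivity
      have hx2 : ‖x‖ ^ 2 ≤ R₀ ^ 2 := by
        have h1 : ‖x‖ ≤ R₀ := by simpa [dist_eq_norm] using mem_closedBall.1 (hR₀ hxA)
        exact pow_le_pow_left₀ (norm_nonneg x) h1 2
      have h1 : δ * (‖x‖ ^ 2 - Rsq) ≤ -δ := by
        have h2 : ‖x‖ ^ 2 - Rsq ≤ -1 := by rw [hRsqdef]; linarith
        nlinarith
      have hsum : ∑ i ∈ T, Real.exp (lam * (L i x - c i)) ≤ T.card • (δ / (T.card + 1)) := by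
        refine Finset.sum_le_card_nsmul T _ _ fun i hi => ?_
        have h3 : L i x - c i ≤ -μ i := by have := hμK i x hx; linarith
        have h4 : Real.exp (lam * (L i x - c i)) ≤ Real.exp (lam * (-μ i)) :=
          Real.exp_le_exp.2 (mul_le_mul_of_nonneg_left h3 hlam0.le)
        exact le_of_lt (lt_of_le_of_lt h4 (hlamT i hi))
      have hcard : (T.card : ℝ) * (δ / (T.card + 1)) < δ := by
        have hpos : (0:ℝ) < (T.card : ℝ) + 1 := by positivity
        have h5 : (T.card : ℝ) / ((T.card : ℝ) + 1) < 1 := (div_lt_one hpos).2 (by linarith)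
        calc (T.card : ℝ) * (δ / (T.card + 1)) = δ * ((T.card : ℝ) / ((T.card : ℝ) + 1)) := by
              ring
          _ < δ * 1 := by exact mul_lt_mul_of_pos_left h5 hδ
          _ = δ := mul_one δ
      rw [nsmul_eq_mul] at hsum
      linarith
    · -- closure V ⊆ U
      intro x hx
      have hFx : F x ≤ 0 := closure_lt_subset_le hFsm.continuous continuous_const hx
      rw [hFeval x] at hFx
      have hLlt : ∀ i ∈ T, L i x < c i := by
        intro i hi
        have h1 : Real.exp (lam * (L i x - c i)) ≤ ∑ j ∈ T, Real.exp (lam * (L j x - c j)) :=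
          Finset.single_le_sum (f := fun j => Real.exp (lam * (L j x - c j)))
            (fun j _ => (Real.exp_pos _).le) hi
        have h2 : (0:ℝ) ≤ δ * ‖x‖ ^ 2 := by positivity
        have h3 : Real.exp (lam * (L i x - c i)) < 1 := by nlinarith
        have h4 : lam * (L i x - c i) < 0 := by
          have := Real.exp_lt_one_iff.1 h3
          exact this
        nlinarith
      have hxA : x ∈ A := by
        by_contra hxA
        have hxd : ε < infDist x C := not_le.mp hxA
        set φ : ℝ → ℝ := fun θ => infDist (k₀ + θ • (x - k₀)) C with hφdef
        have hφc : Continuous φ := (continuous_infDist_pt C).comp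
          (continuous_const.add (continuous_id.smul continuous_const))
        have hφ0 : φ 0 = 0 := by
          simp only [hφdef, zero_smul, add_zero]
          exact infDist_zero_of_mem (hKC hk₀)
        have hφ1 : ε < φ 1 := by
          simpa only [hφdef, one_smul, add_sub_cancel] using hxd
        have hεmem : ε ∈ Set.Icc (φ 0) (φ 1) := ⟨by rw [hφ0]; positivity, le_of_lt hφ1⟩
        obtain ⟨θ, hθmem, hθeq⟩ := intermediate_value_Icc (by norm_num : (0:ℝ) ≤ 1)
          hφc.continuousOn hεmem
        obtain ⟨hθ0, hθ1⟩ := hθmem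
        have hzS : (k₀ + θ • (x - k₀)) ∈ S := hθeq
        obtain ⟨i, hiT, hiz⟩ : ∃ i ∈ T, c i < L i (k₀ + θ • (x - k₀)) := by
          have h6 := hT hzS
          simp only [Set.mem_iUnion, Set.mem_setOf_eq] at h6
          obtain ⟨i, hi, h⟩ := h6
          exact ⟨i, hi, h⟩
        have hk₀B : L i k₀ < c i := hLB i k₀ (hKB hk₀)
        have hxi : L i x < c i := hLlt i hiT
        have hLz : L i (k₀ + θ • (x - k₀)) = L i k₀ + θ * (L i x - L i k₀) := by
          rw [map_add, map_smul, map_sub]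
          simp [smul_eq_mul]
        rw [hLz] at hiz
        have hp1 : 0 ≤ θ * (c i - L i x) := mul_nonneg hθ0 (by linarith)
        have hp2 : 0 ≤ (1 - θ) * (c i - L i k₀) := mul_nonneg (by linarith) (by linarith)
        nlinarith
      exact hAU hxA
    · -- Hessian positivity
      intro x v hv
      rw [hFhess x v, Finset.sum_disjSum]
      have he1 : ∀ j : Fin m,
          deriv (deriv (Sum.elim (fun _ : Fin m => fun s : ℝ => δ * s ^ 2)
            (fun i : ↥S => fun s : ℝ => Real.exp (lam * (s - c i))) (Sum.inl j)))
            ((Sum.elim (fun j : Fin m => EuclideanSpace.proj j) L (Sum.inl j)) x)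
            * ((Sum.elim (fun j : Fin m => EuclideanSpace.proj j) L (Sum.inl j)) v) ^ 2
            = 2 * δ * (v j) ^ 2 := by
        intro j
        simp only [Sum.elim_inl]
        rw [d2_sq δ]
        simp [PiLp.proj_apply]
      have h1 : ∑ j : Fin m, deriv (deriv (Sum.elim (fun _ : Fin m => fun s : ℝ => δ * s ^ 2)
            (fun i : ↥S => fun s : ℝ => Real.exp (lam * (s - c i))) (Sum.inl j)))
            ((Sum.elim (fun j : Fin m => EuclideanSpace.proj j) L (Sum.inl j)) x)
            * ((Sum.elim (fun j : Fin m => EuclideanSpace.proj j) L (Sum.inl j)) v) ^ 2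
          = 2 * δ * ‖v‖ ^ 2 := by
        rw [Finset.sum_congr rfl fun j _ => he1 j, ← Finset.mul_sum, sum_sq_eq_norm_sq]
      rw [h1]
      have h2 : (0:ℝ) ≤ ∑ i ∈ T, deriv (deriv (Sum.elim (fun _ : Fin m => fun s : ℝ => δ * s ^ 2)
            (fun i : ↥S => fun s : ℝ => Real.exp (lam * (s - c i))) (Sum.inr i)))
            ((Sum.elim (fun j : Fin m => EuclideanSpace.proj j) L (Sum.inr i)) x)
            * ((Sum.elim (fun j : Fin m => EuclideanSpace.proj j) L (Sum.inr i)) v) ^ 2 := by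
        refine Finset.sum_nonneg fun i _ => ?_
        simp only [Sum.elim_inr]
        rw [d2_exp lam (c i)]
        positivity
      have h3 : 0 < ‖v‖ ^ 2 := pow_pos (norm_pos_iff.mpr hv) 2
      nlinarith
end

section
/- Let ζ : C(M;ℝ) → ℝ be a functional that is monotone in the sense that min(F−G) ≤ ζ(F) − ζ(G) ≤ max(F−G), positively homogeneous (ζ(aH) = aζ(H) for a ≥ 0), and satisfies ζ(H+c) = ζ(H)+c for constants c. Let X ⊂ M be closed. Then the following are equivalent: (i) there exists H₀ ≤ 0 with {H₀ = 0} = X and ζ(H₀) = 0; (ii) for every H ≤ 0 with H|_X = 0 one has ζ(H) = 0. -/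
/-!
If `H₀ ≤ 0` vanishes exactly on `X` and `ζ H₀ = 0`, take `H ≤ 0` vanishing on `X`. For `ε > 0`,
the compact set `{H ≤ -ε}` misses `X`, so `H₀` is bounded away from `0` there and
`a • H₀ - ε ≤ H` for `a` large; monotonicity, homogeneity and the shift property give
`-ε = ζ (a • H₀ - ε) ≤ ζ H ≤ ζ 0 = 0`. Conversely, a closed subset of a metric (indeed, of any
perfectly normal) space is the zero set of a continuous function, whose negative is a valid `H₀`.
-/

open ContinuousMap

theorem exists_smul_add_const_le_of_nonneg_on_zeroSet {M : Type*} [TopologicalSpace M]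
    [CompactSpace M] {H₀ H : C(M, ℝ)} (hH₀ : ∀ x, H₀ x ≤ 0) (hzero : ∀ x, H₀ x = 0 → 0 ≤ H x)
    {ε : ℝ} (hε : 0 < ε) : ∃ a : ℝ, 0 ≤ a ∧ a • H₀ + const M (-ε) ≤ H := by
  set K := {x | H x ≤ -ε}
  have hK : IsCompact K := (isClosed_le H.continuous continuous_const).isCompact
  have hpos : ∀ x ∈ K, 0 < -H₀ x := fun x hx =>
    neg_pos.2 <| (hH₀ x).lt_of_ne fun h => (hzero x h).not_gt (hx.trans_lt (neg_neg_of_pos hε))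
  obtain ⟨δ, hδ, hδK⟩ := hK.exists_forall_le' (by fun_prop) hpos
  refine ⟨‖H‖ / δ, by positivity, fun x => show ‖H‖ / δ * H₀ x + -ε ≤ H x from ?_⟩
  have hlower : -‖H‖ ≤ H x := neg_le_of_abs_le (H.norm_coe_le_norm x)
  by_cases hx : x ∈ K
  · have hscaled : ‖H‖ ≤ ‖H‖ / δ * -H₀ x := by
      calc ‖H‖ = ‖H‖ / δ * δ := (div_mul_cancel₀ _ hδ.ne').symm
        _ ≤ ‖H‖ / δ * -H₀ x := by gcongr; exact hδK x hx
    linarith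
  · have hscaled : ‖H‖ / δ * H₀ x ≤ 0 := mul_nonpos_of_nonneg_of_nonpos (by positivity) (hH₀ x)
    have hx' : -ε < H x := not_le.1 hx
    linarith

theorem exists_nonpos_setOf_eq_zero_eq {M : Type*} [TopologicalSpace M] [PerfectlyNormalSpace M]
    {X : Set M} (hX : IsClosed X) : ∃ H₀ : C(M, ℝ), (∀ x, H₀ x ≤ 0) ∧ {x | H₀ x = 0} = X := by
  obtain ⟨f, hfX, hf⟩ := perfectlyNormalSpace_iff_forall_isClosed_preimage_zero.1 ‹_› X hX
  refine ⟨-f, fun x => neg_nonpos.2 (hf x).1, ?_⟩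
  simp [hfX, Set.preimage]

section Functional

variable {M : Type*} [TopologicalSpace M] {ζ : C(M, ℝ) → ℝ}

theorem monotone_of_sub_le_iSup (h : ∀ F G : C(M, ℝ), ζ F - ζ G ≤ ⨆ x, (F x - G x)) :
    Monotone ζ :=
  fun F G hFG => sub_nonpos.1 <| (h F G).trans <| Real.iSup_nonpos fun x => sub_nonpos.2 (hFG x)

theorem map_zero_of_smul_eq_mul (hhom : ∀ a : ℝ, 0 ≤ a → ∀ H : C(M, ℝ), ζ (a • H) = a * ζ H) :
    ζ 0 = 0 := by
  simpa using hhom 0 le_rfl 0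

theorem map_nonneg_of_nonneg_on_zeroSet [CompactSpace M] (hmono : Monotone ζ)
    (hhom : ∀ a : ℝ, 0 ≤ a → ∀ H : C(M, ℝ), ζ (a • H) = a * ζ H)
    (hshift : ∀ (H : C(M, ℝ)) (c : ℝ), ζ (H + const M c) = ζ H + c)
    {H₀ H : C(M, ℝ)} (hH₀ : ∀ x, H₀ x ≤ 0) (hζH₀ : ζ H₀ = 0)
    (hzero : ∀ x, H₀ x = 0 → 0 ≤ H x) : 0 ≤ ζ H :=
  le_of_forall_sub_le fun ε hε => by
    obtain ⟨a, ha, hle⟩ := exists_smul_add_const_le_of_nonneg_on_zeroSet hH₀ hzero hε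
    calc 0 - ε = ζ (a • H₀ + const M (-ε)) := by rw [hshift, hhom a ha, hζH₀]; ring
      _ ≤ ζ H := hmono hle

end Functional

theorem heavy_criterion_general {M : Type*} [MetricSpace M] [CompactSpace M]
    (ζ : C(M, ℝ) → ℝ)
    (hmono : ∀ F G : C(M, ℝ),
      (⨅ x, (F x - G x)) ≤ ζ F - ζ G ∧ ζ F - ζ G ≤ ⨆ x, (F x - G x))
    (hhom : ∀ (a : ℝ), 0 ≤ a → ∀ H : C(M, ℝ), ζ (a • H) = a * ζ H)
    (hshift : ∀ (H : C(M, ℝ)) (c : ℝ), ζ (H + ContinuousMap.const M c) = ζ H + c)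
    (X : Set M) (hX : IsClosed X) :
    (∃ H₀ : C(M, ℝ), (∀ x, H₀ x ≤ 0) ∧ {x | H₀ x = 0} = X ∧ ζ H₀ = 0) ↔
      (∀ H : C(M, ℝ), (∀ x, H x ≤ 0) → (∀ x ∈ X, H x = 0) → ζ H = 0) := by
  have hmono' : Monotone ζ := monotone_of_sub_le_iSup fun F G => (hmono F G).2
  constructor
  · rintro ⟨H₀, hH₀, rfl, hζH₀⟩ H hH hHX
    have hle : ζ H ≤ 0 := (hmono' (show H ≤ 0 from hH)).trans_eq (map_zero_of_smul_eq_mul hhom)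
    exact hle.antisymm <| map_nonneg_of_nonneg_on_zeroSet hmono' hhom hshift hH₀ hζH₀
      fun x hx => (hHX x hx).ge
  · intro hall
    obtain ⟨H₀, hH₀, hzero⟩ := exists_nonpos_setOf_eq_zero_eq hX
    exact ⟨H₀, hH₀, hzero, hall H₀ hH₀ fun _ hx => hzero.ge hx⟩

/-- For a monotone, positively homogeneous, shift-invariant functional `ζ` on
`C(M;ℝ)` and a closed set `X ⊆ M`: the existence of some `H₀ ≤ 0` with zero set
exactly `X` and `ζ(H₀) = 0` is equivalent to `ζ(H) = 0` for every `H ≤ 0`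
vanishing on `X`. -/
theorem heavy_criterion {M : Type*} [MetricSpace M] [CompactSpace M] [Nonempty M]
    (ζ : C(M, ℝ) → ℝ)
    (hmono : ∀ F G : C(M, ℝ),
      (⨅ x, (F x - G x)) ≤ ζ F - ζ G ∧ ζ F - ζ G ≤ ⨆ x, (F x - G x))
    (hhom : ∀ (a : ℝ), 0 ≤ a → ∀ H : C(M, ℝ), ζ (a • H) = a * ζ H)
    (hshift : ∀ (H : C(M, ℝ)) (c : ℝ), ζ (H + ContinuousMap.const M c) = ζ H + c)
    (X : Set M) (hX : IsClosed X) :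
    (∃ H₀ : C(M, ℝ), (∀ x, H₀ x ≤ 0) ∧ {x | H₀ x = 0} = X ∧ ζ H₀ = 0) ↔
      (∀ H : C(M, ℝ), (∀ x, H x ≤ 0) → (∀ x ∈ X, H x = 0) → ζ H = 0) :=
  heavy_criterion_general ζ hmono hhom hshift X hX
end

section
/- Let A ∈ Sp(2n, ℝ) and let X ∈ sp(2n,ℝ) have isotropic image. Choose a Lagrangian L₀ ⊇ Im(AX) and a Lagrangian L₁ with L₁ ⊕ L₀ = ℝ^{2n} and L₀ ∩ AL₁ = 0. Then P₀ + P₁A is invertible, where P₀, P₁ are the projections onto L₀, L₁ associated with the decomposition ℝ^{2n} = L₁ ⊕ L₀; moreover, for every t ∈ ℝ the graph of A(Id + tX) is a Lagrangian subspace of (ℝ^{2n} × ℝ^{2n}, (−ω₀) ⊕ ω₀) transverse to L₁ × L₀. -/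
section aux

variable {n : ℕ} (ω₀ : (Fin n ⊕ Fin n → ℝ) → (Fin n ⊕ Fin n → ℝ) → ℝ)
    (hω₀ : ∀ x y, ω₀ x y =
      ∑ j, (x (Sum.inl j) * y (Sum.inr j) - x (Sum.inr j) * y (Sum.inl j)))

include hω₀ in
lemma omega_nondeg (x : Fin n ⊕ Fin n → ℝ) (h : ∀ y, ω₀ x y = 0) : x = 0 := by
  funext i
  cases i with
  | inl j =>
    have := h (Pi.single (Sum.inr j) 1)
    rw [hω₀] at this
    simpa [Pi.single_apply, Finset.sum_ite_eq'] using this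
  | inr j =>
    have := h (Pi.single (Sum.inl j) 1)
    rw [hω₀] at this
    simp [Pi.single_apply, Finset.sum_ite_eq'] at this
    simpa using this

include hω₀ in
lemma omega_zero_left (y : Fin n ⊕ Fin n → ℝ) : ω₀ 0 y = 0 := by
  rw [hω₀]; simp

end aux

/-- Let `A ∈ Sp(2n)` and `X` with `Id + tX ∈ Sp(2n)` for all `t` (so `Im X` is
isotropic). For Lagrangians `L₀ ⊇ Im(AX)` and `L₁` with `ℝ^{2n} = L₁ ⊕ L₀` and
`L₀ ∩ A L₁ = 0`, the map `P₀ + P₁A` is invertible, and for every `t` the graph of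
`A(Id + tX)` is a Lagrangian of `(ℝ^{2n} × ℝ^{2n}, (-ω₀) ⊕ ω₀)` transverse to
`L₁ × L₀`. -/
theorem graph_lagrangian_transverse {n : ℕ}
    (ω₀ : (Fin n ⊕ Fin n → ℝ) → (Fin n ⊕ Fin n → ℝ) → ℝ)
    (hω₀ : ∀ x y, ω₀ x y =
      ∑ j, (x (Sum.inl j) * y (Sum.inr j) - x (Sum.inr j) * y (Sum.inl j)))
    (A X : Matrix (Fin n ⊕ Fin n) (Fin n ⊕ Fin n) ℝ)
    (hA : ∀ x y, ω₀ (A.mulVec x) (A.mulVec y) = ω₀ x y)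
    (hX : ∀ (t : ℝ) (x y),
      ω₀ ((1 + t • X).mulVec x) ((1 + t • X).mulVec y) = ω₀ x y)
    (L₀ L₁ : Submodule ℝ (Fin n ⊕ Fin n → ℝ))
    (hL₀ : (∀ u ∈ L₀, ∀ v ∈ L₀, ω₀ u v = 0) ∧ Module.finrank ℝ L₀ = n)
    (hL₁ : (∀ u ∈ L₁, ∀ v ∈ L₁, ω₀ u v = 0) ∧ Module.finrank ℝ L₁ = n)
    (hIm : LinearMap.range (A * X).mulVecLin ≤ L₀)
    (hcompl : IsCompl L₁ L₀)
    (htrans : L₀ ⊓ L₁.map A.mulVecLin = ⊥) :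
    Function.Bijective
      (L₀.subtype.comp (L₀.linearProjOfIsCompl L₁ hcompl.symm) +
        (L₁.subtype.comp (L₁.linearProjOfIsCompl L₀ hcompl)).comp A.mulVecLin) ∧
    ∀ t : ℝ,
      (∀ p ∈ LinearMap.graph (A * (1 + t • X)).mulVecLin,
        ∀ q ∈ LinearMap.graph (A * (1 + t • X)).mulVecLin,
          -ω₀ (Prod.fst p) (Prod.fst q) + ω₀ (Prod.snd p) (Prod.snd q) = 0) ∧
      Module.finrank ℝ (LinearMap.graph (A * (1 + t • X)).mulVecLin) = 2 * n ∧
      LinearMap.graph (A * (1 + t • X)).mulVecLin ⊓ L₁.prod L₀ = ⊥ := by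
  -- A is injective
  have hAinj : Function.Injective A.mulVec := by
    intro x y hxy
    have h0 : A.mulVec (x - y) = 0 := by
      rw [Matrix.mulVec_sub, hxy, sub_self]
    have : x - y = 0 := by
      apply omega_nondeg ω₀ hω₀
      intro z
      rw [← hA (x - y) z, h0, omega_zero_left ω₀ hω₀]
    exact sub_eq_zero.mp this
  constructor
  · -- bijectivity of P₀ + P₁ A
    rw [Function.Bijective, and_iff_left_of_imp LinearMap.surjective_of_injective,
      ← LinearMap.ker_eq_bot, Submodule.eq_bot_iff]
    intro x hx
    simp only [LinearMap.mem_ker, LinearMap.add_apply, LinearMap.comp_apply,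
      Submodule.subtype_apply] at hx
    set a := L₀.linearProjOfIsCompl L₁ hcompl.symm x with ha
    set b := L₁.linearProjOfIsCompl L₀ hcompl (A.mulVecLin x) with hb
    have ha0 : (a : Fin n ⊕ Fin n → ℝ) = 0 := by
      have hmem : (a : Fin n ⊕ Fin n → ℝ) ∈ L₁ := by
        have : (a : Fin n ⊕ Fin n → ℝ) = -(b : Fin n ⊕ Fin n → ℝ) := by
          rw [eq_neg_iff_add_eq_zero]; exact hx
        rw [this]; exact L₁.neg_mem b.2
      exact Submodule.disjoint_def.mp hcompl.symm.disjoint _ a.2 hmem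
    have hb0 : (b : Fin n ⊕ Fin n → ℝ) = 0 := by
      have := hx; rw [ha0, zero_add] at this; exact this
    have hxL₁ : x ∈ L₁ := by
      rwa [← Submodule.linearProjOfIsCompl_apply_eq_zero_iff hcompl.symm,
        ← ZeroMemClass.coe_eq_zero]
    have hAxL₀ : A.mulVecLin x ∈ L₀ := by
      rwa [← Submodule.linearProjOfIsCompl_apply_eq_zero_iff hcompl,
        ← ZeroMemClass.coe_eq_zero]
    have hAx0 : A.mulVecLin x = 0 := by
      have : A.mulVecLin x ∈ L₀ ⊓ L₁.map A.mulVecLin :=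
        ⟨hAxL₀, ⟨x, hxL₁, rfl⟩⟩
      rwa [htrans, Submodule.mem_bot] at this
    have : A.mulVec x = A.mulVec 0 := by
      simpa [Matrix.mulVecLin_apply] using hAx0
    exact hAinj this
  · intro t
    set M := (A * (1 + t • X)) with hM
    have hMω : ∀ x y, ω₀ (M.mulVec x) (M.mulVec y) = ω₀ x y := by
      intro x y
      rw [hM, ← Matrix.mulVec_mulVec, ← Matrix.mulVec_mulVec, hA, hX]
    refine ⟨?_, ?_, ?_⟩
    · rintro p hp q hq
      rw [LinearMap.mem_graph_iff] at hp hq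
      rw [hp, hq, Matrix.mulVecLin_apply, Matrix.mulVecLin_apply, hMω]
      ring
    · rw [LinearMap.graph_eq_range_prod]
      have hinj : Function.Injective (LinearMap.id.prod M.mulVecLin) := by
        intro x y hxy
        exact congrArg Prod.fst hxy
      rw [LinearMap.finrank_range_of_inj hinj, Module.finrank_fintype_fun_eq_card]
      simp [Fintype.card_sum, two_mul]
    · rw [Submodule.eq_bot_iff]
      intro p hp
      rw [Submodule.mem_inf] at hp
      obtain ⟨hg, hpr⟩ := hp
      obtain ⟨x, y⟩ := p
      rw [LinearMap.mem_graph_iff] at hg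
      rw [Submodule.mem_prod] at hpr
      obtain ⟨hx1, hy0⟩ := hpr
      simp only at hg hx1 hy0
      have hAXx : (A * X).mulVecLin x ∈ L₀ := hIm ⟨x, rfl⟩
      have hAx : A.mulVecLin x ∈ L₀ := by
        have hy : y = A.mulVecLin x + t • (A * X).mulVecLin x := by
          rw [hg, hM]
          simp [Matrix.mulVecLin_apply, Matrix.mul_add, Matrix.add_mulVec,
            Matrix.mul_smul, Matrix.smul_mulVec, Matrix.mul_one]
        have : A.mulVecLin x = y - t • (A * X).mulVecLin x := by
          rw [hy]; abel
        rw [this]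
        exact L₀.sub_mem hy0 (L₀.smul_mem t hAXx)
      have hAx0 : A.mulVecLin x = 0 := by
        have : A.mulVecLin x ∈ L₀ ⊓ L₁.map A.mulVecLin := ⟨hAx, ⟨x, hx1, rfl⟩⟩
        rwa [htrans, Submodule.mem_bot] at this
      have hx0 : x = 0 := by
        have : A.mulVec x = A.mulVec 0 := by simpa [Matrix.mulVecLin_apply] using hAx0
        exact hAinj this
      have hy0' : y = 0 := by rw [hg, hx0]; simp
      simp [hx0, hy0']
end

section
/- Let Φ ∈ Sp(2n,ℝ) and X ∈ sp(2n,ℝ) with isotropic image such that Im(Φ − Id) ∩ Im(X) = 0 and ΦX = X. Then rank(Φ(Id + X) − Id) − rank(Φ − Id) = rank(X). -/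
/-!
Write `A = Φ - 1`; since `ΦX = X`, `Φ(1 + X) - 1 = A + X`. For `ω₀`, the orthogonal of
`range A` is `ker A` because `Φ` is an isometry, and the orthogonal of `range X` is `ker X`
because `X` is skew-adjoint (compare the coefficients of `t` in the isometry identity for
`Id + tX` at `t = ±1`). Taking orthogonals in `range A ⊓ range X = ⊥` gives
`ker A ⊔ ker X = ⊤`, so every vector splits as `a + b` with `A a = 0 = X b`; hence
`range (A + X) = range A ⊔ range X`, a direct sum.
-/

open Module
open LinearMap (BilinForm)

namespace LinearMap

section Rank

variable {R K M M₂ V W : Type*} [Semiring R] [AddCommMonoid M] [Module R M] [AddCommMonoid M₂]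
  [Module R M₂]

theorem range_add_eq_sup_of_sup_ker_eq_top {f g : M →ₗ[R] M₂} (h : ker f ⊔ ker g = ⊤) :
    range (f + g) = range f ⊔ range g := by
  refine le_antisymm (range_add_le f g) (sup_le ?_ ?_) <;> rintro _ ⟨v, rfl⟩ <;>
    obtain ⟨a, ha, b, hb, rfl⟩ :=
      Submodule.mem_sup.mp (h ▸ Submodule.mem_top : v ∈ ker f ⊔ ker g)
  · exact ⟨b, by simp [mem_ker.mp ha, mem_ker.mp hb]⟩
  · exact ⟨a, by simp [mem_ker.mp ha, mem_ker.mp hb]⟩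

variable [DivisionRing K] [AddCommGroup V] [Module K V] [FiniteDimensional K V] [AddCommGroup W]
  [Module K W]

theorem finrank_range_add_of_disjoint {f g : V →ₗ[K] W} (hker : ker f ⊔ ker g = ⊤)
    (hrange : Disjoint (range f) (range g)) :
    finrank K (range (f + g)) = finrank K (range f) + finrank K (range g) := by
  rw [range_add_eq_sup_of_sup_ker_eq_top hker, ← Submodule.finrank_sup_add_finrank_inf_eq,
    hrange.eq_bot, finrank_bot, add_zero]

end Rank

namespace BilinForm

section Orthogonal

variable {R M M₁ : Type*} [CommRing R] [AddCommGroup M] [Module R M] [AddCommGroup M₁]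
  [Module R M₁] {B : BilinForm R M} {B' : BilinForm R M₁}

theorem orthogonal_sup (U W : Submodule R M) :
    B.orthogonal (U ⊔ W) = B.orthogonal U ⊓ B.orthogonal W := by
  refine le_antisymm (le_inf (orthogonal_le le_sup_left) (orthogonal_le le_sup_right)) ?_
  rintro y ⟨hU, hW⟩ _ hv
  obtain ⟨u, hu, w, hw, rfl⟩ := Submodule.mem_sup.mp hv
  simp [hU u hu, hW w hw]

theorem orthogonal_range_eq_ker_of_isAdjointPair (hB : B.SeparatingRight) {f : M →ₗ[R] M₁}
    {g : M₁ →ₗ[R] M} (hfg : IsAdjointPair B B' f g) : B'.orthogonal (range f) = ker g := by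
  ext y
  refine ⟨fun h => hB _ fun x => ?_, fun h => ?_⟩
  · rw [← hfg]
    exact h _ ⟨x, rfl⟩
  · rintro _ ⟨x, rfl⟩
    rw [hfg, mem_ker.mp h, map_zero]

end Orthogonal

section Field

variable {K V : Type*} [Field K] [AddCommGroup V] [Module K V] {B : BilinForm K V}

theorem isAdjointPair_neg_of_isometry_add_smul [NeZero (2 : K)] {f : V →ₗ[K] V}
    (hf : ∀ (t : K) x y, B (x + t • f x) (y + t • f y) = B x y) :
    IsAdjointPair B B f (-f) := by
  have expand : ∀ (t : K) x y,
      t * (B (f x) y + B x (f y)) + t ^ 2 * B (f x) (f y) = 0 := by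
    intro t x y
    have := hf t x y
    simp only [map_add, map_smul, LinearMap.add_apply, LinearMap.smul_apply, smul_eq_mul] at this
    linear_combination this
  intro x y
  have h2 : (2 : K) * (B (f x) y + B x (f y)) = 0 := by
    linear_combination expand 1 x y - expand (-1) x y
  rw [Pi.neg_apply, map_neg]
  linear_combination (mul_eq_zero.mp h2).resolve_left two_ne_zero

variable [FiniteDimensional K V]

theorem orthogonal_sup_orthogonal_eq_top (hB : B.Nondegenerate) (hB₀ : B.IsRefl)
    {U W : Submodule K V} (h : Disjoint U W) : B.orthogonal U ⊔ B.orthogonal W = ⊤ := by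
  rw [← orthogonal_orthogonal hB hB₀ (_ ⊔ _), orthogonal_sup, orthogonal_orthogonal hB hB₀,
    orthogonal_orthogonal hB hB₀, h.eq_bot, orthogonal_bot]

theorem orthogonal_range_sub_one_eq_ker (hB : B.Nondegenerate) {φ : V →ₗ[K] V}
    (hφ : ∀ x y, B (φ x) (φ y) = B x y) : B.orthogonal (range (φ - 1)) = ker (φ - 1) := by
  have hsurj : Function.Surjective φ := injective_iff_surjective.mp <|
    (injective_iff_map_eq_zero φ).mpr fun x hx => hB.1 x fun y => by
      rw [← hφ, hx, map_zero, LinearMap.zero_apply]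
  have key : ∀ x y, B ((φ - 1) x) y = -B (φ x) ((φ - 1) y) := by
    intro x y
    simp [hφ]
  ext y
  refine ⟨fun h => hB.2 _ fun z => ?_, fun h => ?_⟩
  · obtain ⟨x, rfl⟩ := hsurj z
    exact neg_eq_zero.mp (key x y ▸ h _ ⟨x, rfl⟩)
  · rintro _ ⟨x, rfl⟩
    rw [key, mem_ker.mp h, map_zero, neg_zero]

end Field

end BilinForm

end LinearMap

namespace Matrix

variable {l R : Type*} [Fintype l] [DecidableEq l]

theorem toBilin'_J_transpose_apply [CommRing R] (x y : l ⊕ l → R) :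
    (J l R)ᵀ.toBilin' x y =
      ∑ j, (x (Sum.inl j) * y (Sum.inr j) - x (Sum.inr j) * y (Sum.inl j)) := by
  simp [toBilin'_apply', J, dotProduct, Fintype.sum_sum_type, mulVec, fromBlocks, one_apply,
    Finset.sum_sub_distrib, ← sub_eq_add_neg]

theorem nondegenerate_toBilin'_J_transpose [Field R] : (J l R)ᵀ.toBilin'.Nondegenerate :=
  LinearMap.BilinForm.nondegenerate_toBilin'_of_det_ne_zero' _ <| by
    rw [det_transpose]
    exact (isUnit_det_J l R).ne_zero

end Matrix

open LinearMap LinearMap.BilinForm Matrix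

/-- If `Φ ∈ Sp(2n)` and `X` satisfies `Id + tX ∈ Sp(2n)` for all `t`, with
`ΦX = X` and `Im(Φ - Id) ∩ Im X = 0`, then
`rank(Φ(Id + X) - Id) = rank(Φ - Id) + rank X`. -/
theorem rank_symplectic_perturbation {n : ℕ}
    (ω₀ : (Fin n ⊕ Fin n → ℝ) → (Fin n ⊕ Fin n → ℝ) → ℝ)
    (hω₀ : ∀ x y, ω₀ x y =
      ∑ j, (x (Sum.inl j) * y (Sum.inr j) - x (Sum.inr j) * y (Sum.inl j)))
    (Φ X : Matrix (Fin n ⊕ Fin n) (Fin n ⊕ Fin n) ℝ)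
    (hΦ : ∀ x y, ω₀ (Φ.mulVec x) (Φ.mulVec y) = ω₀ x y)
    (hX : ∀ (t : ℝ) (x y),
      ω₀ ((1 + t • X).mulVec x) ((1 + t • X).mulVec y) = ω₀ x y)
    (hΦX : Φ * X = X)
    (hinter : LinearMap.range (Φ - 1).mulVecLin ⊓ LinearMap.range X.mulVecLin = ⊥) :
    (Φ * (1 + X) - 1).rank = (Φ - 1).rank + X.rank := by
  set B := (J (Fin n) ℝ)ᵀ.toBilin'
  have hB : ∀ x y, B x y = ω₀ x y := fun x y => by rw [hω₀, toBilin'_J_transpose_apply]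
  have hB₀ : B.IsRefl := BilinForm.IsAlt.isRefl fun x => by simp [hB, hω₀, mul_comm]
  have hA : B.orthogonal (range (Φ - 1).mulVecLin) = ker (Φ - 1).mulVecLin := by
    have hsub : (Φ - 1).mulVecLin = Φ.mulVecLin - 1 := LinearMap.ext fun x => by simp
    rw [hsub]
    exact orthogonal_range_sub_one_eq_ker nondegenerate_toBilin'_J_transpose fun x y => by
      simpa [hB] using hΦ x y
  have hY : B.orthogonal (range X.mulVecLin) = ker X.mulVecLin := by
    rw [← ker_neg]
    refine orthogonal_range_eq_ker_of_isAdjointPair nondegenerate_toBilin'_J_transpose.2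
      (isAdjointPair_neg_of_isometry_add_smul fun t x y => ?_)
    rw [hB, hB]
    convert hX t x y using 2 <;> simp [add_mulVec, smul_mulVec]
  have hker : ker (Φ - 1).mulVecLin ⊔ ker X.mulVecLin = ⊤ := by
    rw [← hA, ← hY]
    exact orthogonal_sup_orthogonal_eq_top nondegenerate_toBilin'_J_transpose hB₀
      (disjoint_iff.mpr hinter)
  have hsplit : Φ * (1 + X) - 1 = (Φ - 1) + X := by
    rw [mul_add, mul_one, hΦX, add_sub_right_comm]
  rw [Matrix.rank, Matrix.rank, Matrix.rank, hsplit, mulVecLin_add]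
  exact finrank_range_add_of_disjoint hker (disjoint_iff.mpr hinter)
end
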